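/- In the heterogeneous random graph G_n(α,β,W), there is a constant C = C(α,β) such that for all n, all admissible weight arrays W, and all vertices i∈[n], the variance of t_i satisfies E[(t_i − E[t_i])²] ≤ C(n³ p_n⁵ + n² p_n³). -/

import Mathlib

open MeasureTheory ProbabilityTheory Filter Finset Topology

noncomputable section

namespace HetRG

/-- The edge-probability scale `p_n = n^{-α}`. -/
def pn (α : ℝ) (n : ℕ) : ℝ := (n : ℝ) ^ (-α)

/-- `δ_n = (log (n p_n))^{-2}`. -/
def deltan (α : ℝ) (n : ℕ) : ℝ := (Real.log ((n : ℝ) * pn α n) ^ 2)⁻¹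

/-- The heterogeneous Erdős–Rényi random graph `G_n(α, β, W)`: `A` is a symmetric
random 0-1 adjacency matrix with zero diagonal, the entries `A i j` for `i < j` are
independent Bernoulli with success probability `μ_{ij} = p_n * w i j`, where the
symmetric weight array `w` has zero diagonal and off-diagonal entries in `[β, 1]`. -/
structure IsHetRG (α β : ℝ) {Ω : Type} [MeasureSpace Ω] (n : ℕ)
    (w : Fin n → Fin n → ℝ) (A : Fin n → Fin n → Ω → ℝ) : Prop where
  isProb : IsProbabilityMeasure (volume : Measure Ω)
  meas : ∀ i j, Measurable (A i j)
  wSymm : ∀ i j, w i j = w j i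
  wDiag : ∀ i, w i i = 0
  wMem : ∀ i j, i ≠ j → w i j ∈ Set.Icc β 1
  aSymm : ∀ i j, A i j = A j i
  aDiag : ∀ i ω, A i i ω = 0
  aVal : ∀ i j ω, A i j ω = 0 ∨ A i j ω = 1
  aBern : ∀ i j, i ≠ j → volume {ω | A i j ω = 1} = ENNReal.ofReal (pn α n * w i j)
  aIndep : iIndepFun
      (fun p : {p : Fin n × Fin n // p.1 < p.2} => A p.1.1 p.1.2) volume

variable {Ω : Type} [MeasureSpace Ω]

/-- `μ_{ij} = p_n w_{ij}`. -/
def muij (α : ℝ) {n : ℕ} (w : Fin n → Fin n → ℝ) (i j : Fin n) : ℝ := pn α n * w i j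

/-- `μ_i = ∑_j μ_{ij}`. -/
def mui (α : ℝ) {n : ℕ} (w : Fin n → Fin n → ℝ) (i : Fin n) : ℝ := ∑ j, muij α w i j

/-- The degree `d_i = ∑_j A_{ij}`. -/
def deg {n : ℕ} (A : Fin n → Fin n → Ω → ℝ) (i : Fin n) (ω : Ω) : ℝ := ∑ j, A i j ω

/-- The centered entry `Ā_{ij} = A_{ij} - μ_{ij}`. -/
def abar (α : ℝ) {n : ℕ} (w : Fin n → Fin n → ℝ) (A : Fin n → Fin n → Ω → ℝ)
    (i j : Fin n) (ω : Ω) : ℝ := A i j ω - muij α w i j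

/-- `t_i = ∑_{j ≠ k} A_{ij} A_{jk} A_{ki}`. -/
def tri {n : ℕ} (A : Fin n → Fin n → Ω → ℝ) (i : Fin n) (ω : Ω) : ℝ :=
  ∑ j, ∑ k, if j ≠ k then A i j ω * A j k ω * A k i ω else 0

/-- `∑_{j ≠ k} A_{ij} A_{ik}`, the denominator in the clustering coefficient. -/
def wedge {n : ℕ} (A : Fin n → Fin n → Ω → ℝ) (i : Fin n) (ω : Ω) : ℝ :=
  ∑ j, ∑ k, if j ≠ k then A i j ω * A i k ω else 0

/-- The average clustering coefficient `C̄_n` (summands with zero denominator are zero,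
by the junk-value convention `x / 0 = 0`). -/
def clust {n : ℕ} (A : Fin n → Fin n → Ω → ℝ) (ω : Ω) : ℝ :=
  (n : ℝ)⁻¹ * ∑ i, tri A i ω / wedge A i ω

/-- `a_i = E[1/(d_i (d_i - 1))]`, with the convention that the integrand is `0`
when `d_i ∈ {0, 1}` (junk value `0⁻¹ = 0`). -/
def ai {n : ℕ} (A : Fin n → Fin n → Ω → ℝ) (i : Fin n) : ℝ :=
  ∫ ω, (deg A i ω * (deg A i ω - 1))⁻¹

/-- `E[t_i]`. -/
def Etri {n : ℕ} (A : Fin n → Fin n → Ω → ℝ) (i : Fin n) : ℝ := ∫ ω, tri A i ω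

/-- `b_i = E[t_i] (2μ_i - 1) / (μ_i² (μ_i - 1)²)`. -/
def bi (α : ℝ) {n : ℕ} (w : Fin n → Fin n → ℝ) (A : Fin n → Fin n → Ω → ℝ) (i : Fin n) : ℝ :=
  Etri A i * (2 * mui α w i - 1) / (mui α w i ^ 2 * (mui α w i - 1) ^ 2)

/-- `c_{ij} = ∑_{k ≠ i,j} a_k μ_{ki} μ_{kj}`. -/
def cij (α : ℝ) {n : ℕ} (w : Fin n → Fin n → ℝ) (A : Fin n → Fin n → Ω → ℝ)
    (i j : Fin n) : ℝ :=
  ∑ k, if k ≠ i ∧ k ≠ j then ai A k * muij α w k i * muij α w k j else 0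

/-- `d_{ij} = ∑_{k ≠ i,j} μ_{ki} μ_{kj}`. -/
def dij (α : ℝ) {n : ℕ} (w : Fin n → Fin n → ℝ) (i j : Fin n) : ℝ :=
  ∑ k, if k ≠ i ∧ k ≠ j then muij α w k i * muij α w k j else 0

/-- `e_{ij} = 2 c_{ij} + 2 (a_i d_{ij} + a_j d_{ji}) - b_i - b_j`. -/
def eij (α : ℝ) {n : ℕ} (w : Fin n → Fin n → ℝ) (A : Fin n → Fin n → Ω → ℝ)
    (i j : Fin n) : ℝ :=
  2 * cij α w A i j + 2 * (ai A i * dij α w i j + ai A j * dij α w j i)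
    - bi α w A i - bi α w A j

/-- `a_{ijk} = a_i + a_j + a_k`. -/
def aijk {n : ℕ} (A : Fin n → Fin n → Ω → ℝ) (i j k : Fin n) : ℝ := ai A i + ai A j + ai A k

/-- `σ_{1n}² = (4/n²) ∑_{i<j<k} a_{ijk}² μ_{ij}(1-μ_{ij}) μ_{jk}(1-μ_{jk}) μ_{ki}(1-μ_{ki})`. -/
def sigma1sq (α : ℝ) {n : ℕ} (w : Fin n → Fin n → ℝ) (A : Fin n → Fin n → Ω → ℝ) : ℝ :=
  4 / (n : ℝ) ^ 2 * ∑ i, ∑ j, ∑ k, if i < j ∧ j < k then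
    aijk A i j k ^ 2 * (muij α w i j * (1 - muij α w i j)) *
      (muij α w j k * (1 - muij α w j k)) * (muij α w k i * (1 - muij α w k i)) else 0

/-- `σ_{2n}² = (4/n²) ∑_{i<j} e_{ij}² μ_{ij}(1-μ_{ij})`. -/
def sigma2sq (α : ℝ) {n : ℕ} (w : Fin n → Fin n → ℝ) (A : Fin n → Fin n → Ω → ℝ) : ℝ :=
  4 / (n : ℝ) ^ 2 * ∑ i, ∑ j, if i < j then
    eij α w A i j ^ 2 * (muij α w i j * (1 - muij α w i j)) else 0

/-- The sum of weighted triangles `T_n = ∑_{i<j<k} A_{ij}A_{jk}A_{ki}/(d_i d_j d_k)`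
(summands with zero denominator are zero by the junk-value convention). -/
def Tn {n : ℕ} (A : Fin n → Fin n → Ω → ℝ) (ω : Ω) : ℝ :=
  ∑ i, ∑ j, ∑ k, if i < j ∧ j < k then
    A i j ω * A j k ω * A k i ω / (deg A i ω * deg A j ω * deg A k ω) else 0

/-- `η_i = ∑_{j ≠ k} μ_{ij} μ_{jk} μ_{ki} / (μ_i² μ_j μ_k)`. -/
def etai (α : ℝ) {n : ℕ} (w : Fin n → Fin n → ℝ) (i : Fin n) : ℝ :=
  ∑ j, ∑ k, if j ≠ k then
    muij α w i j * muij α w j k * muij α w k i /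
      (mui α w i ^ 2 * mui α w j * mui α w k) else 0

/-- `γ_{ij} = ∑_{k ∉ {i,j}} μ_{jk} μ_{ki} / (μ_i μ_j μ_k)`. -/
def gammaij (α : ℝ) {n : ℕ} (w : Fin n → Fin n → ℝ) (i j : Fin n) : ℝ :=
  ∑ k, if k ≠ i ∧ k ≠ j then
    muij α w j k * muij α w k i / (mui α w i * mui α w j * mui α w k) else 0

/-- `v_{1n}² = ∑_{i<j<k} μ_{ij}(1-μ_{ij}) μ_{jk}(1-μ_{jk}) μ_{ki}(1-μ_{ki}) / (μ_i² μ_j² μ_k²)`. -/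
def v1sq (α : ℝ) {n : ℕ} (w : Fin n → Fin n → ℝ) : ℝ :=
  ∑ i, ∑ j, ∑ k, if i < j ∧ j < k then
    muij α w i j * (1 - muij α w i j) * (muij α w j k * (1 - muij α w j k)) *
      (muij α w k i * (1 - muij α w k i)) /
      (mui α w i ^ 2 * mui α w j ^ 2 * mui α w k ^ 2) else 0

/-- `v_{2n}² = ∑_{i<j} (γ_{ij} - (η_i + η_j)/2)² μ_{ij}(1-μ_{ij})`. -/
def v2sq (α : ℝ) {n : ℕ} (w : Fin n → Fin n → ℝ) : ℝ :=
  ∑ i, ∑ j, if i < j then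
    (gammaij α w i j - (etai α w i + etai α w j) / 2) ^ 2 *
      (muij α w i j * (1 - muij α w i j)) else 0

/-- Convergence in distribution to the standard normal law `N(0,1)`, phrased as
pointwise convergence of the CDFs (every point is a continuity point of the
standard Gaussian CDF). -/
def CDFTendstoGaussian (X : ℕ → Ω → ℝ) : Prop :=
  ∀ x : ℝ, Tendsto (fun n => (volume {ω | X n ω ≤ x}).toReal) atTop
    (𝓝 ((gaussianReal 0 1 (Set.Iic x)).toReal))

/-- `X_n = o_P(r_n)`: `X_n / r_n → 0` in probability. -/
def IsoP (X : ℕ → Ω → ℝ) (r : ℕ → ℝ) : Prop :=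
  ∀ ε : ℝ, 0 < ε →
    Tendsto (fun n => (volume {ω | ε * |r n| < |X n ω|}).toReal) atTop (𝓝 0)

/-- The Erdős–Rényi weight array: all off-diagonal weights equal to `c`. -/
def wER (c : ℝ) (n : ℕ) : Fin n → Fin n → ℝ := fun i j => if i = j then 0 else c

/-- The rank-1 weight array `w_{ij} = w_i w_j` (zero on the diagonal). -/
def wRank1 {n : ℕ} (v : Fin n → ℝ) : Fin n → Fin n → ℝ :=
  fun i j => if i = j then 0 else v i * v j


/-! ### Auxiliary machinery for Statement 10 -/

section Aux10

variable {α β : ℝ} {n : ℕ} {w : Fin n → Fin n → ℝ} {A : Fin n → Fin n → Ω → ℝ}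

abbrev Edge (n : ℕ) := {p : Fin n × Fin n // p.1 < p.2}

/-- The sorted edge on two distinct vertices. -/
def sE {n : ℕ} (a b : Fin n) (hab : a ≠ b) : Edge n :=
  if h : a < b then ⟨(a, b), h⟩ else ⟨(b, a), (hab.lt_or_gt.resolve_left h)⟩

lemma sE_inj {a b c d : Fin n} {hab : a ≠ b} {hcd : c ≠ d}
    (h : sE a b hab = sE c d hcd) : (a = c ∧ b = d) ∨ (a = d ∧ b = c) := by
  unfold sE at h
  split_ifs at h <;>
    simp only [Subtype.mk.injEq, Prod.mk.injEq] at h <;> tauto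

lemma sE_ne {a b c d : Fin n} {hab : a ≠ b} {hcd : c ≠ d}
    (h1 : ¬(a = c ∧ b = d)) (h2 : ¬(a = d ∧ b = c)) : sE a b hab ≠ sE c d hcd :=
  fun h => (sE_inj h).elim h1 h2

def mue (α : ℝ) {n : ℕ} (w : Fin n → Fin n → ℝ) (e : Edge n) : ℝ := muij α w e.1.1 e.1.2

lemma A_nonneg (h : IsHetRG α β n w A) (i j : Fin n) (ω : Ω) : 0 ≤ A i j ω := by
  rcases h.aVal i j ω with h' | h' <;> simp [h']

lemma A_le_one (h : IsHetRG α β n w A) (i j : Fin n) (ω : Ω) : A i j ω ≤ 1 := by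
  rcases h.aVal i j ω with h' | h' <;> simp [h']

lemma A_sE (h : IsHetRG α β n w A) {a b : Fin n} (hab : a ≠ b) :
    A (sE a b hab).1.1 (sE a b hab).1.2 = A a b := by
  unfold sE; split
  · rfl
  · exact (h.aSymm a b).symm

lemma mue_sE (h : IsHetRG α β n w A) {a b : Fin n} (hab : a ≠ b) :
    mue α w (sE a b hab) = muij α w a b := by
  unfold sE mue muij; split
  · rfl
  · simp only [h.wSymm a b]

lemma pn_nonneg : 0 ≤ pn α n := Real.rpow_nonneg (Nat.cast_nonneg n) _

lemma pn_le_one (hα : 0 < α) (hn : 0 < n) : pn α n ≤ 1 := by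
  apply Real.rpow_le_one_of_one_le_of_nonpos
  · exact_mod_cast hn
  · linarith

lemma w_nonneg (h : IsHetRG α β n w A) (hβ : 0 ≤ β) (a b : Fin n) : 0 ≤ w a b := by
  by_cases hab : a = b
  · simp [hab, h.wDiag]
  · exact le_trans hβ (h.wMem a b hab).1

lemma w_le_one (h : IsHetRG α β n w A) (a b : Fin n) : w a b ≤ 1 := by
  by_cases hab : a = b
  · simp [hab, h.wDiag]
  · exact (h.wMem a b hab).2

lemma muij_nonneg (h : IsHetRG α β n w A) (hβ : 0 ≤ β) (a b : Fin n) : 0 ≤ muij α w a b :=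
  mul_nonneg pn_nonneg (w_nonneg h hβ a b)

lemma muij_le_pn (h : IsHetRG α β n w A) (a b : Fin n) : muij α w a b ≤ pn α n := by
  have := mul_le_mul_of_nonneg_left (w_le_one h a b) (pn_nonneg (α := α) (n := n))
  simpa [muij] using this

lemma muij_le_one (h : IsHetRG α β n w A) (hα : 0 < α) (hn : 0 < n) (a b : Fin n) :
    muij α w a b ≤ 1 := (muij_le_pn h a b).trans (pn_le_one hα hn)

lemma integral_A (h : IsHetRG α β n w A) (hβ : 0 ≤ β) {a b : Fin n} (hab : a ≠ b) :
    ∫ ω, A a b ω = muij α w a b := by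
  have hset : MeasurableSet {ω | A a b ω = 1} := h.meas a b (measurableSet_singleton 1)
  have heq : (fun ω => A a b ω) = Set.indicator {ω | A a b ω = 1} (1 : Ω → ℝ) := by
    funext ω
    rcases h.aVal a b ω with h' | h'
    · rw [h', Set.indicator_apply_eq_zero.2]
      intro hmem
      exact absurd (Set.mem_setOf_eq ▸ hmem) (by rw [h']; norm_num)
    · rw [h', Set.indicator_of_mem (by simpa [Set.mem_setOf_eq] using h')]
      rfl
  rw [heq, integral_indicator_one hset, measureReal_def, h.aBern a b hab]
  exact ENNReal.toReal_ofReal (muij_nonneg h hβ a b)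

lemma integrable_bdd [IsProbabilityMeasure (volume : Measure Ω)] {f : Ω → ℝ}
    (hm : Measurable f) {C : ℝ} (hb : ∀ ω, |f ω| ≤ C) : Integrable f :=
  ⟨hm.aestronglyMeasurable, HasFiniteIntegral.of_bounded (ae_of_all _ hb)⟩

lemma integrable_prod_A (h : IsHetRG α β n w A) (S : Finset (Edge n)) :
    Integrable (fun ω => ∏ e ∈ S, A e.1.1 e.1.2 ω) := by
  haveI := h.isProb
  refine integrable_bdd (Finset.measurable_prod _ fun e _ => h.meas _ _) (C := 1) fun ω => ?_
  rw [abs_of_nonneg (Finset.prod_nonneg fun e _ => A_nonneg h _ _ ω)]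
  exact Finset.prod_le_one (fun e _ => A_nonneg h _ _ ω) (fun e _ => A_le_one h _ _ ω)

lemma integral_prod_A (h : IsHetRG α β n w A) (hβ : 0 ≤ β) (S : Finset (Edge n)) :
    ∫ ω, ∏ e ∈ S, A e.1.1 e.1.2 ω = ∏ e ∈ S, mue α w e := by
  classical
  haveI := h.isProb
  induction S using Finset.induction_on with
  | empty => simp
  | @insert e S he ih =>
    have hind : IndepFun (∏ f ∈ S, (fun p : Edge n => A p.1.1 p.1.2) f)
        ((fun p : Edge n => A p.1.1 p.1.2) e) volume :=
      h.aIndep.indepFun_finsetProd_of_notMem (fun p => h.meas _ _) he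
    have hmul := hind.integral_mul_eq_mul_integral
      (by simpa [Finset.prod_fn] using (integrable_prod_A h S).1)
      (integrable_bdd (h.meas _ _) (C := 1) fun ω => by
        rw [abs_of_nonneg (A_nonneg h _ _ ω)]; exact A_le_one h _ _ ω).1
    simp only [Finset.prod_insert he]
    rw [← ih]
    have hfun : (fun ω => A e.1.1 e.1.2 ω * ∏ f ∈ S, A f.1.1 f.1.2 ω)
        = (∏ f ∈ S, (fun p : Edge n => A p.1.1 p.1.2) f) * (fun p : Edge n => A p.1.1 p.1.2) e := by
      funext ω; simp [Finset.prod_fn, mul_comm]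
    calc ∫ ω, A e.1.1 e.1.2 ω * ∏ f ∈ S, A f.1.1 f.1.2 ω
        = ∫ ω, ((∏ f ∈ S, (fun p : Edge n => A p.1.1 p.1.2) f)
            * (fun p : Edge n => A p.1.1 p.1.2) e) ω := by rw [hfun]
      _ = (∫ ω, ∏ f ∈ S, A f.1.1 f.1.2 ω) * ∫ ω, A e.1.1 e.1.2 ω := by
          rw [hmul]; simp [Finset.prod_fn]
      _ = (∫ ω, A e.1.1 e.1.2 ω) * ∫ ω, ∏ f ∈ S, A f.1.1 f.1.2 ω := mul_comm _ _
      _ = mue α w e * ∫ ω, ∏ f ∈ S, A f.1.1 f.1.2 ω := by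
          rw [integral_A h hβ (Fin.ne_of_lt e.2)]; rfl

lemma prod_A_mul_prod_A (h : IsHetRG α β n w A) (S T : Finset (Edge n)) (ω : Ω) :
    (∏ e ∈ S, A e.1.1 e.1.2 ω) * ∏ e ∈ T, A e.1.1 e.1.2 ω
      = ∏ e ∈ S ∪ T, A e.1.1 e.1.2 ω := by
  classical
  rw [← Finset.prod_union_inter]
  rw [← Finset.prod_sdiff (Finset.inter_subset_union (s := S) (t := T))
    (f := fun e : Edge n => A e.1.1 e.1.2 ω)]
  rw [mul_assoc, ← Finset.prod_mul_distrib]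
  congr 1
  refine Finset.prod_congr rfl fun e _ => ?_
  rcases h.aVal e.1.1 e.1.2 ω with h' | h' <;> rw [h'] <;> ring

lemma prod_mue_le (h : IsHetRG α β n w A) (hβ0 : 0 ≤ β) (hα : 0 < α) (hn : 0 < n)
    {U V : Finset (Edge n)} (hUV : U ⊆ V) :
    ∏ e ∈ V, mue α w e ≤ pn α n ^ U.card := by
  have h0 : ∀ e : Edge n, 0 ≤ mue α w e := fun e => muij_nonneg h hβ0 _ _
  calc ∏ e ∈ V, mue α w e ≤ ∏ e ∈ U, mue α w e := by
        rw [← Finset.prod_sdiff hUV]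
        have h1 : ∏ e ∈ V \ U, mue α w e ≤ 1 :=
          Finset.prod_le_one (fun e _ => h0 e) (fun e _ => muij_le_one h hα hn _ _)
        nlinarith [Finset.prod_nonneg (fun e (_ : e ∈ U) => h0 e),
          Finset.prod_nonneg (fun e (_ : e ∈ V \ U) => h0 e)]
    _ ≤ ∏ _e ∈ U, pn α n := Finset.prod_le_prod (fun e _ => h0 e) (fun e _ => muij_le_pn h _ _)
    _ = pn α n ^ U.card := Finset.prod_const _

lemma prod_three (h : IsHetRG α β n w A) {a b c : Fin n}
    (hab : a ≠ b) (hbc : b ≠ c) (hca : c ≠ a) (ω : Ω) :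
    A a b ω * A b c ω * A c a ω
      = ∏ e ∈ ({sE a b hab, sE b c hbc, sE c a hca} : Finset (Edge n)), A e.1.1 e.1.2 ω := by
  classical
  have h12 : sE a b hab ≠ sE b c hbc :=
    sE_ne (fun hc => hab hc.1) (fun hc => hca hc.1.symm)
  have h13 : sE a b hab ≠ sE c a hca :=
    sE_ne (fun hc => hca hc.1.symm) (fun hc => hbc hc.2)
  have h23 : sE b c hbc ≠ sE c a hca :=
    sE_ne (fun hc => hbc hc.1) (fun hc => hab hc.1.symm)
  rw [Finset.prod_insert (by simp [h12, h13]), Finset.prod_insert (by simp [h23]),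
    Finset.prod_singleton, A_sE h hab, A_sE h hbc, A_sE h hca, mul_assoc]

lemma card_S3 {a b c : Fin n} (hab : a ≠ b) (hbc : b ≠ c) (hca : c ≠ a) :
    ({sE a b hab, sE b c hbc, sE c a hca} : Finset (Edge n)).card = 3 := by
  classical
  have h12 : sE a b hab ≠ sE b c hbc :=
    sE_ne (fun hc => hab hc.1) (fun hc => hca hc.1.symm)
  have h13 : sE a b hab ≠ sE c a hca :=
    sE_ne (fun hc => hca hc.1.symm) (fun hc => hbc hc.2)
  have h23 : sE b c hbc ≠ sE c a hca :=
    sE_ne (fun hc => hbc hc.1) (fun hc => hab hc.1.symm)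
  rw [Finset.card_insert_of_notMem (by simp [h12, h13]),
    Finset.card_insert_of_notMem (by simp [h23]), Finset.card_singleton]

lemma cov_formula (h : IsHetRG α β n w A) (hβ0 : 0 ≤ β) {i j k j' k' : Fin n}
    (hij : i ≠ j) (hjk : j ≠ k) (hki : k ≠ i)
    (hij' : i ≠ j') (hj'k' : j' ≠ k') (hk'i : k' ≠ i) :
    (∫ ω, (A i j ω * A j k ω * A k i ω) * (A i j' ω * A j' k' ω * A k' i ω))
      - (∫ ω, A i j ω * A j k ω * A k i ω) * (∫ ω, A i j' ω * A j' k' ω * A k' i ω)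
    = (∏ e ∈ (({sE i j hij, sE j k hjk, sE k i hki} : Finset (Edge n))
          ∪ {sE i j' hij', sE j' k' hj'k', sE k' i hk'i}), mue α w e)
      - (∏ e ∈ ({sE i j hij, sE j k hjk, sE k i hki} : Finset (Edge n)), mue α w e)
        * ∏ e ∈ ({sE i j' hij', sE j' k' hj'k', sE k' i hk'i} : Finset (Edge n)), mue α w e := by
  classical
  have e1 := prod_three h hij hjk hki
  have e2 := prod_three h hij' hj'k' hk'i
  have e3 : ∀ ω, (A i j ω * A j k ω * A k i ω) * (A i j' ω * A j' k' ω * A k' i ω)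
      = ∏ e ∈ (({sE i j hij, sE j k hjk, sE k i hki} : Finset (Edge n))
          ∪ {sE i j' hij', sE j' k' hj'k', sE k' i hk'i}), A e.1.1 e.1.2 ω := fun ω => by
    rw [e1 ω, e2 ω, prod_A_mul_prod_A h]
  have I12 : (∫ ω, (A i j ω * A j k ω * A k i ω) * (A i j' ω * A j' k' ω * A k' i ω))
      = ∏ e ∈ (({sE i j hij, sE j k hjk, sE k i hki} : Finset (Edge n))
          ∪ {sE i j' hij', sE j' k' hj'k', sE k' i hk'i}), mue α w e := by
    simp only [e3]; exact integral_prod_A h hβ0 _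
  have I1 : (∫ ω, A i j ω * A j k ω * A k i ω)
      = ∏ e ∈ ({sE i j hij, sE j k hjk, sE k i hki} : Finset (Edge n)), mue α w e := by
    simp only [e1]; exact integral_prod_A h hβ0 _
  have I2 : (∫ ω, A i j' ω * A j' k' ω * A k' i ω)
      = ∏ e ∈ ({sE i j' hij', sE j' k' hj'k', sE k' i hk'i} : Finset (Edge n)), mue α w e := by
    simp only [e2]; exact integral_prod_A h hβ0 _
  rw [I12, I1, I2]

lemma cov_le (h : IsHetRG α β n w A) (hβ0 : 0 ≤ β) {i j k j' k' : Fin n}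
    (hij : i ≠ j) (hjk : j ≠ k) (hki : k ≠ i)
    (hij' : i ≠ j') (hj'k' : j' ≠ k') (hk'i : k' ≠ i) :
    (∫ ω, (A i j ω * A j k ω * A k i ω) * (A i j' ω * A j' k' ω * A k' i ω))
      - (∫ ω, A i j ω * A j k ω * A k i ω) * (∫ ω, A i j' ω * A j' k' ω * A k' i ω)
    ≤ ∏ e ∈ (({sE i j hij, sE j k hjk, sE k i hki} : Finset (Edge n))
          ∪ {sE i j' hij', sE j' k' hj'k', sE k' i hk'i}), mue α w e := by
  classical
  rw [cov_formula h hβ0 hij hjk hki hij' hj'k' hk'i]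
  have h0 : ∀ e : Edge n, 0 ≤ mue α w e := fun e => muij_nonneg h hβ0 _ _
  have := mul_nonneg
    (Finset.prod_nonneg fun e (_ : e ∈ ({sE i j hij, sE j k hjk, sE k i hki} : Finset (Edge n))) => h0 e)
    (Finset.prod_nonneg fun e (_ : e ∈ ({sE i j' hij', sE j' k' hj'k', sE k' i hk'i} : Finset (Edge n))) => h0 e)
  linarith

lemma cov_le_p3 (h : IsHetRG α β n w A) (hβ0 : 0 ≤ β) (hα : 0 < α) (hn : 0 < n)
    {i j k j' k' : Fin n}
    (hij : i ≠ j) (hjk : j ≠ k) (hki : k ≠ i)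
    (hij' : i ≠ j') (hj'k' : j' ≠ k') (hk'i : k' ≠ i) :
    (∫ ω, (A i j ω * A j k ω * A k i ω) * (A i j' ω * A j' k' ω * A k' i ω))
      - (∫ ω, A i j ω * A j k ω * A k i ω) * (∫ ω, A i j' ω * A j' k' ω * A k' i ω)
    ≤ pn α n ^ 3 := by
  classical
  refine (cov_le h hβ0 hij hjk hki hij' hj'k' hk'i).trans ?_
  have := prod_mue_le h hβ0 hα hn
    (U := ({sE i j hij, sE j k hjk, sE k i hki} : Finset (Edge n)))
    (V := (({sE i j hij, sE j k hjk, sE k i hki} : Finset (Edge n))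
      ∪ {sE i j' hij', sE j' k' hj'k', sE k' i hk'i})) Finset.subset_union_left
  rwa [card_S3 hij hjk hki] at this

lemma cov_le_p5 (h : IsHetRG α β n w A) (hβ0 : 0 ≤ β) (hα : 0 < α) (hn : 0 < n)
    {i v k k' : Fin n}
    (hiv : i ≠ v) (hvk : v ≠ k) (hki : k ≠ i)
    (hvk' : v ≠ k') (hk'i : k' ≠ i) (hkk' : k ≠ k') :
    (∫ ω, (A i v ω * A v k ω * A k i ω) * (A i v ω * A v k' ω * A k' i ω))
      - (∫ ω, A i v ω * A v k ω * A k i ω) * (∫ ω, A i v ω * A v k' ω * A k' i ω)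
    ≤ pn α n ^ 5 := by
  classical
  refine (cov_le h hβ0 hiv hvk hki hiv hvk' hk'i).trans ?_
  have hab : sE i v hiv ≠ sE v k hvk := sE_ne (fun hc => hiv hc.1) (fun hc => hki hc.1.symm)
  have hac : sE i v hiv ≠ sE k i hki := sE_ne (fun hc => hki hc.1.symm) (fun hc => hvk hc.2)
  have had : sE i v hiv ≠ sE v k' hvk' := sE_ne (fun hc => hiv hc.1) (fun hc => hk'i hc.1.symm)
  have hae : sE i v hiv ≠ sE k' i hk'i := sE_ne (fun hc => hk'i hc.1.symm) (fun hc => hvk' hc.2)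
  have hbc : sE v k hvk ≠ sE k i hki := sE_ne (fun hc => hvk hc.1) (fun hc => hiv hc.1.symm)
  have hbd : sE v k hvk ≠ sE v k' hvk' := sE_ne (fun hc => hkk' hc.2) (fun hc => hvk' hc.1)
  have hbe : sE v k hvk ≠ sE k' i hk'i := sE_ne (fun hc => hvk' hc.1) (fun hc => hiv hc.1.symm)
  have hcd : sE k i hki ≠ sE v k' hvk' := sE_ne (fun hc => hvk hc.1.symm) (fun hc => hkk' hc.1)
  have hce : sE k i hki ≠ sE k' i hk'i := sE_ne (fun hc => hkk' hc.1) (fun hc => hki hc.1)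
  have hde : sE v k' hvk' ≠ sE k' i hk'i := sE_ne (fun hc => hvk' hc.1) (fun hc => hiv hc.1.symm)
  have hsub : ({sE i v hiv, sE v k hvk, sE k i hki, sE v k' hvk', sE k' i hk'i} : Finset (Edge n))
      ⊆ (({sE i v hiv, sE v k hvk, sE k i hki} : Finset (Edge n))
          ∪ {sE i v hiv, sE v k' hvk', sE k' i hk'i}) := by
    intro f hf
    simp only [Finset.mem_insert, Finset.mem_singleton, Finset.mem_union] at hf ⊢
    tauto
  have hcard : ({sE i v hiv, sE v k hvk, sE k i hki, sE v k' hvk', sE k' i hk'i}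
      : Finset (Edge n)).card = 5 := by
    rw [Finset.card_insert_of_notMem (by simp [hab, hac, had, hae]),
      Finset.card_insert_of_notMem (by simp [hbc, hbd, hbe]),
      Finset.card_insert_of_notMem (by simp [hcd, hce]),
      Finset.card_insert_of_notMem (by simp [hde]), Finset.card_singleton]
  have := prod_mue_le h hβ0 hα hn hsub
  rwa [hcard] at this

lemma cov_eq_zero (h : IsHetRG α β n w A) (hβ0 : 0 ≤ β) {i j k j' k' : Fin n}
    (hij : i ≠ j) (hjk : j ≠ k) (hki : k ≠ i)
    (hij' : i ≠ j') (hj'k' : j' ≠ k') (hk'i : k' ≠ i)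
    (hj'j : j' ≠ j) (hj'k : j' ≠ k) (hk'j : k' ≠ j) (hk'k : k' ≠ k) :
    (∫ ω, (A i j ω * A j k ω * A k i ω) * (A i j' ω * A j' k' ω * A k' i ω))
      - (∫ ω, A i j ω * A j k ω * A k i ω) * (∫ ω, A i j' ω * A j' k' ω * A k' i ω)
    = 0 := by
  classical
  have d11 : sE i j hij ≠ sE i j' hij' := sE_ne (fun hc => hj'j hc.2.symm) (fun hc => hij hc.2.symm)
  have d12 : sE i j hij ≠ sE j' k' hj'k' := sE_ne (fun hc => hij' hc.1) (fun hc => hk'i hc.1.symm)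
  have d13 : sE i j hij ≠ sE k' i hk'i := sE_ne (fun hc => hk'i hc.1.symm) (fun hc => hk'j hc.2.symm)
  have d21 : sE j k hjk ≠ sE i j' hij' := sE_ne (fun hc => hij hc.1.symm) (fun hc => hj'j hc.1.symm)
  have d22 : sE j k hjk ≠ sE j' k' hj'k' := sE_ne (fun hc => hj'j hc.1.symm) (fun hc => hk'j hc.1.symm)
  have d23 : sE j k hjk ≠ sE k' i hk'i := sE_ne (fun hc => hk'j hc.1.symm) (fun hc => hij hc.1.symm)
  have d31 : sE k i hki ≠ sE i j' hij' := sE_ne (fun hc => hki hc.1) (fun hc => hj'k hc.1.symm)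
  have d32 : sE k i hki ≠ sE j' k' hj'k' := sE_ne (fun hc => hj'k hc.1.symm) (fun hc => hk'k hc.1.symm)
  have d33 : sE k i hki ≠ sE k' i hk'i := sE_ne (fun hc => hk'k hc.1.symm) (fun hc => hki hc.1)
  have hdisj : Disjoint ({sE i j hij, sE j k hjk, sE k i hki} : Finset (Edge n))
      ({sE i j' hij', sE j' k' hj'k', sE k' i hk'i} : Finset (Edge n)) := by
    rw [Finset.disjoint_left]
    intro e he he'
    simp only [Finset.mem_insert, Finset.mem_singleton] at he he'
    rcases he with rfl | rfl | rfl <;> rcases he' with h' | h' | h' <;>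
      first
        | exact d11 h' | exact d12 h' | exact d13 h'
        | exact d21 h' | exact d22 h' | exact d23 h'
        | exact d31 h' | exact d32 h' | exact d33 h'
  rw [cov_formula h hβ0 hij hjk hki hij' hj'k' hk'i, Finset.prod_union hdisj, sub_self]

lemma var_expand [IsProbabilityMeasure (volume : Measure Ω)]
    {ι : Type*} (P : Finset ι) (X : ι → Ω → ℝ)
    (hmeas : ∀ q, Measurable (X q)) (h0 : ∀ q ω, 0 ≤ X q ω) (h1 : ∀ q ω, X q ω ≤ 1) :
    ∫ ω, ((∑ q ∈ P, X q ω) - ∑ q ∈ P, ∫ ω', X q ω') ^ 2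
      = ∑ q ∈ P, ∑ q' ∈ P,
          ((∫ ω, X q ω * X q' ω) - (∫ ω, X q ω) * ∫ ω, X q' ω) := by
  classical
  have hint : ∀ q, Integrable (X q) := fun q =>
    integrable_bdd (hmeas q) (C := 1) fun ω => by
      rw [abs_of_nonneg (h0 q ω)]; exact h1 q ω
  have hm0 : ∀ q, 0 ≤ ∫ ω, X q ω := fun q => integral_nonneg (fun ω => h0 q ω)
  have hm1 : ∀ q, (∫ ω, X q ω) ≤ 1 := fun q => by
    calc ∫ ω, X q ω ≤ ∫ _ω, (1 : ℝ) :=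
          integral_mono (hint q) (integrable_const 1) (fun ω => h1 q ω)
      _ = 1 := by simp
  have hXXint : ∀ q q', Integrable (fun ω => X q ω * X q' ω) := fun q q' =>
    integrable_bdd ((hmeas q).mul (hmeas q')) (C := 1) fun ω => by
      rw [abs_of_nonneg (mul_nonneg (h0 q ω) (h0 q' ω))]
      exact mul_le_one₀ (h1 q ω) (h0 q' ω) (h1 q' ω)
  have hiprod : ∀ q q', Integrable
      (fun ω => (X q ω - ∫ ω', X q ω') * (X q' ω - ∫ ω', X q' ω')) := by
    intro q q'
    refine integrable_bdd
      (((hmeas q).sub measurable_const).mul ((hmeas q').sub measurable_const))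
      (C := 1) fun ω => ?_
    rw [abs_mul]
    have b1 : |X q ω - ∫ ω', X q ω'| ≤ 1 :=
      abs_le.2 ⟨by nlinarith [h0 q ω, hm1 q], by nlinarith [h1 q ω, hm0 q]⟩
    have b2 : |X q' ω - ∫ ω', X q' ω'| ≤ 1 :=
      abs_le.2 ⟨by nlinarith [h0 q' ω, hm1 q'], by nlinarith [h1 q' ω, hm0 q']⟩
    exact mul_le_one₀ b1 (abs_nonneg _) b2
  have hterm : ∀ q q', (∫ ω, (X q ω - ∫ ω', X q ω') * (X q' ω - ∫ ω', X q' ω'))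
      = (∫ ω, X q ω * X q' ω) - (∫ ω, X q ω) * ∫ ω, X q' ω := by
    intro q q'
    set a := ∫ ω', X q ω' with ha
    set b := ∫ ω', X q' ω' with hb
    have hexp : (fun ω => (X q ω - a) * (X q' ω - b))
        = fun ω => (X q ω * X q' ω - a * X q' ω) - (b * X q ω - a * b) := by
      funext ω; ring
    have i2 : Integrable (fun ω => a * X q' ω) := (hint q').const_mul a
    have i3 : Integrable (fun ω => b * X q ω) := (hint q).const_mul b
    have i4 : Integrable (fun _ω : Ω => a * b) := integrable_const _
    have i5 : Integrable (fun ω => X q ω * X q' ω - a * X q' ω) := (hXXint q q').sub i2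
    have i6 : Integrable (fun ω => b * X q ω - a * b) := i3.sub i4
    rw [hexp, integral_sub i5 i6, integral_sub (hXXint q q') i2, integral_sub i3 i4,
      integral_const_mul, integral_const_mul, integral_const]
    simp only [measure_univ, ENNReal.toReal_one, probReal_univ, one_smul]
    rw [← ha, ← hb]
    ring
  calc ∫ ω, ((∑ q ∈ P, X q ω) - ∑ q ∈ P, ∫ ω', X q ω') ^ 2
      = ∫ ω, ∑ q ∈ P, ∑ q' ∈ P,
          (X q ω - ∫ ω', X q ω') * (X q' ω - ∫ ω', X q' ω') := by
        congr 1; funext ω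
        rw [← Finset.sum_sub_distrib, sq, Finset.sum_mul_sum]
    _ = ∑ q ∈ P, ∑ q' ∈ P, ∫ ω,
          (X q ω - ∫ ω', X q ω') * (X q' ω - ∫ ω', X q' ω') := by
        rw [integral_finset_sum _ fun q _ =>
          integrable_finset_sum _ fun q' _ => hiprod q q']
        exact Finset.sum_congr rfl fun q _ =>
          integral_finset_sum _ fun q' _ => hiprod q q'
    _ = _ := Finset.sum_congr rfl fun q _ => Finset.sum_congr rfl fun q' _ => hterm q q'

end Aux10

/-- There is a constant `C = C(α, β)` such that for all `n`, all
admissible weight arrays and all vertices `i`, `Var(t_i) ≤ C (n³ p_n⁵ + n² p_n³)`. -/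
theorem triangle_count_variance_bound
    (α β : ℝ) (hα : α ∈ Set.Ioo (0 : ℝ) 1) (hβ : β ∈ Set.Ioo (0 : ℝ) 1) :
    ∃ C : ℝ, 0 < C ∧ ∀ (n : ℕ) (Ω : Type) [MeasureSpace Ω],
      ∀ (w : Fin n → Fin n → ℝ) (A : Fin n → Fin n → Ω → ℝ),
        IsHetRG α β n w A → ∀ i : Fin n,
          (∫ ω, (tri A i ω - Etri A i) ^ 2) ≤
            C * ((n : ℝ) ^ 3 * pn α n ^ 5 + (n : ℝ) ^ 2 * pn α n ^ 3) := by
  classical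
  refine ⟨4, by norm_num, ?_⟩
  intro n Ω _ w A h i
  haveI := h.isProb
  have hn : 0 < n := i.pos
  have hβ0 : (0 : ℝ) ≤ β := le_of_lt hβ.1
  have hα0 : 0 < α := hα.1
  set p := pn α n with hpdef
  have hp0 : 0 ≤ p := pn_nonneg
  have hp3 : (0 : ℝ) ≤ p ^ 3 := pow_nonneg hp0 3
  have hp5 : (0 : ℝ) ≤ p ^ 5 := pow_nonneg hp0 5
  set P : Finset (Fin n × Fin n) :=
    Finset.univ.filter (fun q : Fin n × Fin n => q.1 ≠ q.2 ∧ q.1 ≠ i ∧ q.2 ≠ i) with hPdef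
  set X : Fin n × Fin n → Ω → ℝ :=
    fun q ω => A i q.1 ω * A q.1 q.2 ω * A q.2 i ω with hXdef
  have hXmeas : ∀ q, Measurable (X q) := by
    intro q; simp only [hXdef]
    exact ((h.meas i q.1).mul (h.meas q.1 q.2)).mul (h.meas q.2 i)
  have hX0 : ∀ q ω, 0 ≤ X q ω := by
    intro q ω; simp only [hXdef]
    exact mul_nonneg (mul_nonneg (A_nonneg h _ _ _) (A_nonneg h _ _ _)) (A_nonneg h _ _ _)
  have hX1 : ∀ q ω, X q ω ≤ 1 := by
    intro q ω; simp only [hXdef]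
    exact mul_le_one₀
      (mul_le_one₀ (A_le_one h _ _ _) (A_nonneg h _ _ _) (A_le_one h _ _ _))
      (A_nonneg h _ _ _) (A_le_one h _ _ _)
  have hXint : ∀ q, Integrable (X q) := fun q =>
    integrable_bdd (hXmeas q) (C := 1) fun ω => by
      rw [abs_of_nonneg (hX0 q ω)]; exact hX1 q ω
  have htri : ∀ ω, tri A i ω = ∑ q ∈ P, X q ω := by
    intro ω
    simp only [tri, hPdef, hXdef]
    rw [← Finset.sum_product', Finset.univ_product_univ, Finset.sum_filter]
    apply Finset.sum_congr rfl
    intro q _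
    by_cases h1 : q.1 ≠ q.2 ∧ q.1 ≠ i ∧ q.2 ≠ i
    · rw [if_pos h1.1, if_pos h1]
    · rw [if_neg h1]
      by_cases h2 : q.1 ≠ q.2
      · rw [if_pos h2]
        have h3 : q.1 = i ∨ q.2 = i := by tauto
        rcases h3 with h3 | h3 <;> simp [h3, h.aDiag]
      · rw [if_neg h2]
  have hE : Etri A i = ∑ q ∈ P, ∫ ω, X q ω := by
    simp only [Etri, htri]
    exact integral_finset_sum _ fun q _ => hXint q
  have key : ∀ q ∈ P, ∀ q' ∈ P,
      ((∫ ω, X q ω * X q' ω) - (∫ ω, X q ω) * ∫ ω, X q' ω)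
      ≤ (if q' = q then p ^ 3 else 0) + (if q' = (q.2, q.1) then p ^ 3 else 0)
        + (if (q'.1 = q.1 ∨ q'.1 = q.2 ∨ q'.2 = q.1 ∨ q'.2 = q.2) then p ^ 5 else 0) := by
    intro q hq q' hq'
    obtain ⟨j, k⟩ := q
    obtain ⟨j', k'⟩ := q'
    simp only [hPdef, Finset.mem_filter, Finset.mem_univ, true_and] at hq hq'
    obtain ⟨hjk, hji, hki⟩ := hq
    obtain ⟨hj'k', hj'i, hk'i⟩ := hq'
    simp only [hXdef]
    have hij : i ≠ j := hji.symm
    have hij' : i ≠ j' := hj'i.symm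
    by_cases hov : j' = j ∨ j' = k ∨ k' = j ∨ k' = k
    · by_cases hsh : ((j', k') = ((j, k) : Fin n × Fin n)) ∨ ((j', k') = ((k, j) : Fin n × Fin n))
      · have hb := cov_le_p3 h hβ0 hα0 hn hij hjk hki hij' hj'k' hk'i
        rcases hsh with h2 | h2
        · rw [if_pos h2, if_pos hov]
          have n2 : (0 : ℝ) ≤ (if ((j', k') = ((k, j) : Fin n × Fin n)) then p ^ 3 else 0) := by
            split_ifs <;> linarith
          linarith
        · rw [if_pos h2, if_pos hov]
          have n1 : (0 : ℝ) ≤ (if ((j', k') = ((j, k) : Fin n × Fin n)) then p ^ 3 else 0) := by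
            split_ifs <;> linarith
          linarith
      · push_neg at hsh
        have hb : (∫ ω, (A i j ω * A j k ω * A k i ω) * (A i j' ω * A j' k' ω * A k' i ω))
            - (∫ ω, A i j ω * A j k ω * A k i ω) * (∫ ω, A i j' ω * A j' k' ω * A k' i ω)
            ≤ p ^ 5 := by
          rcases hov with h1 | h1 | h1 | h1
          · simp only [h1]
            have hjk'2 : j ≠ k' := by rw [← h1]; exact hj'k'
            have hkk' : k ≠ k' := fun hc => hsh.1 (by rw [h1, ← hc])
            exact cov_le_p5 h hβ0 hα0 hn hij hjk hki hjk'2 hk'i hkk'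
          · simp only [h1]
            have hkk'2 : k ≠ k' := by rw [← h1]; exact hj'k'
            have hk'j : k' ≠ j := fun hc => hsh.2 (by rw [h1, hc])
            have hsw : ∀ ω, A i j ω * A j k ω * A k i ω
                = A i k ω * A k j ω * A j i ω := by
              intro ω; rw [h.aSymm i j, h.aSymm j k, h.aSymm k i]; ring
            simp only [hsw]
            exact cov_le_p5 h hβ0 hα0 hn hki.symm hjk.symm hji hkk'2 hk'i hk'j.symm
          · simp only [h1]
            have hj'j : j' ≠ j := by rw [← h1]; exact hj'k'
            have hj'k : j' ≠ k := fun hc => hsh.2 (by rw [h1, hc])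
            have hsw2 : ∀ ω, A i j' ω * A j' j ω * A j i ω
                = A i j ω * A j j' ω * A j' i ω := by
              intro ω; rw [h.aSymm i j', h.aSymm j' j, h.aSymm j i]; ring
            simp only [hsw2]
            exact cov_le_p5 h hβ0 hα0 hn hij hjk hki hj'j.symm hj'i hj'k.symm
          · simp only [h1]
            have hj'k2 : j' ≠ k := by rw [← h1]; exact hj'k'
            have hj'j : j' ≠ j := fun hc => hsh.1 (by rw [h1, hc])
            have hsw : ∀ ω, A i j ω * A j k ω * A k i ω
                = A i k ω * A k j ω * A j i ω := by
              intro ω; rw [h.aSymm i j, h.aSymm j k, h.aSymm k i]; ring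
            have hsw3 : ∀ ω, A i j' ω * A j' k ω * A k i ω
                = A i k ω * A k j' ω * A j' i ω := by
              intro ω; rw [h.aSymm i j', h.aSymm j' k, h.aSymm k i]; ring
            simp only [hsw, hsw3]
            exact cov_le_p5 h hβ0 hα0 hn hki.symm hjk.symm hji hj'k2.symm hj'i hj'j.symm
        rw [if_neg hsh.1, if_neg hsh.2, if_pos hov]
        linarith
    · push_neg at hov
      have h0 := cov_eq_zero h hβ0 hij hjk hki hij' hj'k' hk'i
        hov.1 hov.2.1 hov.2.2.1 hov.2.2.2
      rw [h0, if_neg (fun hc => hov.1 (congrArg Prod.fst hc)),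
        if_neg (fun hc => hov.2.2.1 (congrArg Prod.snd hc)), if_neg (by tauto)]
      norm_num
  have hinner : ∀ q ∈ P,
      (∑ q' ∈ P, ((∫ ω, X q ω * X q' ω) - (∫ ω, X q ω) * ∫ ω, X q' ω))
      ≤ 2 * p ^ 3 + (4 * (n : ℝ)) * p ^ 5 := by
    intro q hq
    have hBnn : ∀ x : Fin n × Fin n,
        (0 : ℝ) ≤ (if x = q then p ^ 3 else 0) + (if x = (q.2, q.1) then p ^ 3 else 0)
          + (if (x.1 = q.1 ∨ x.1 = q.2 ∨ x.2 = q.1 ∨ x.2 = q.2) then p ^ 5 else 0) := by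
      intro x
      have n1 : (0 : ℝ) ≤ (if x = q then p ^ 3 else 0) := by split_ifs <;> linarith
      have n2 : (0 : ℝ) ≤ (if x = (q.2, q.1) then p ^ 3 else 0) := by split_ifs <;> linarith
      have n3 : (0 : ℝ) ≤ (if (x.1 = q.1 ∨ x.1 = q.2 ∨ x.2 = q.1 ∨ x.2 = q.2)
          then p ^ 5 else 0) := by split_ifs <;> linarith
      linarith
    have hsub2 : Finset.univ.filter
          (fun x : Fin n × Fin n => x.1 = q.1 ∨ x.1 = q.2 ∨ x.2 = q.1 ∨ x.2 = q.2)
        ⊆ (({q.1, q.2} : Finset (Fin n)) ×ˢ Finset.univ)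
          ∪ (Finset.univ ×ˢ ({q.1, q.2} : Finset (Fin n))) := by
      intro x hx
      simp only [Finset.mem_filter, Finset.mem_univ, true_and, Finset.mem_union,
        Finset.mem_product, Finset.mem_insert, Finset.mem_singleton, and_true] at hx ⊢
      tauto
    have hc2 : ({q.1, q.2} : Finset (Fin n)).card ≤ 2 :=
      (Finset.card_insert_le _ _).trans (by simp)
    have hcardN : (Finset.univ.filter
        (fun x : Fin n × Fin n => x.1 = q.1 ∨ x.1 = q.2 ∨ x.2 = q.1 ∨ x.2 = q.2)).card
        ≤ 4 * n := by
      refine (Finset.card_le_card hsub2).trans ?_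
      refine (Finset.card_union_le _ _).trans ?_
      rw [Finset.card_product, Finset.card_product, Finset.card_univ, Fintype.card_fin]
      calc ({q.1, q.2} : Finset (Fin n)).card * n + n * ({q.1, q.2} : Finset (Fin n)).card
          ≤ 2 * n + n * 2 := Nat.add_le_add (Nat.mul_le_mul hc2 (le_refl n))
            (Nat.mul_le_mul (le_refl n) hc2)
        _ = 4 * n := by ring
    have hcardR : ((Finset.univ.filter
        (fun x : Fin n × Fin n => x.1 = q.1 ∨ x.1 = q.2 ∨ x.2 = q.1 ∨ x.2 = q.2)).card : ℝ)
        ≤ 4 * (n : ℝ) := by exact_mod_cast hcardN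
    calc (∑ q' ∈ P, ((∫ ω, X q ω * X q' ω) - (∫ ω, X q ω) * ∫ ω, X q' ω))
        ≤ ∑ q' ∈ P, ((if q' = q then p ^ 3 else 0) + (if q' = (q.2, q.1) then p ^ 3 else 0)
            + (if (q'.1 = q.1 ∨ q'.1 = q.2 ∨ q'.2 = q.1 ∨ q'.2 = q.2) then p ^ 5 else 0)) :=
          Finset.sum_le_sum (fun q' hq' => key q hq q' hq')
      _ ≤ ∑ q' ∈ Finset.univ, ((if q' = q then p ^ 3 else 0)
            + (if q' = (q.2, q.1) then p ^ 3 else 0)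
            + (if (q'.1 = q.1 ∨ q'.1 = q.2 ∨ q'.2 = q.1 ∨ q'.2 = q.2) then p ^ 5 else 0)) :=
          Finset.sum_le_sum_of_subset_of_nonneg
            (by rw [hPdef]; exact Finset.filter_subset _ _) (fun x _ _ => hBnn x)
      _ = p ^ 3 + p ^ 3 + ((Finset.univ.filter
            (fun x : Fin n × Fin n => x.1 = q.1 ∨ x.1 = q.2 ∨ x.2 = q.1 ∨ x.2 = q.2)).card : ℝ)
            * p ^ 5 := by
          rw [Finset.sum_add_distrib, Finset.sum_add_distrib]
          congr 1
          · congr 1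
            · simp
            · simp
          · rw [← Finset.sum_filter, Finset.sum_const, nsmul_eq_mul]
      _ ≤ p ^ 3 + p ^ 3 + (4 * (n : ℝ)) * p ^ 5 := by
          have := mul_le_mul_of_nonneg_right hcardR hp5
          linarith
      _ = 2 * p ^ 3 + (4 * (n : ℝ)) * p ^ 5 := by ring
  have hPcard : ((P.card : ℝ)) ≤ (n : ℝ) * n := by
    have h1 : P.card ≤ n * n := by
      rw [hPdef]
      refine (Finset.card_filter_le _ _).trans (le_of_eq ?_)
      simp [Finset.card_univ]
    exact_mod_cast h1
  have hcnn : (0 : ℝ) ≤ 2 * p ^ 3 + (4 * (n : ℝ)) * p ^ 5 := by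
    have h4n : (0 : ℝ) ≤ 4 * (n : ℝ) := by positivity
    nlinarith [mul_nonneg h4n hp5]
  calc (∫ ω, (tri A i ω - Etri A i) ^ 2)
      = ∑ q ∈ P, ∑ q' ∈ P, ((∫ ω, X q ω * X q' ω) - (∫ ω, X q ω) * ∫ ω, X q' ω) := by
        rw [← var_expand (Ω := Ω) P X hXmeas hX0 hX1]
        congr 1; funext ω; rw [htri ω, hE]
    _ ≤ ∑ _q ∈ P, (2 * p ^ 3 + (4 * (n : ℝ)) * p ^ 5) := Finset.sum_le_sum hinner
    _ = (P.card : ℝ) * (2 * p ^ 3 + (4 * (n : ℝ)) * p ^ 5) := by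
        rw [Finset.sum_const, nsmul_eq_mul]
    _ ≤ ((n : ℝ) * n) * (2 * p ^ 3 + (4 * (n : ℝ)) * p ^ 5) :=
        mul_le_mul_of_nonneg_right hPcard hcnn
    _ ≤ 4 * ((n : ℝ) ^ 3 * p ^ 5 + (n : ℝ) ^ 2 * p ^ 3) := by
        have hnn : (0 : ℝ) ≤ (n : ℝ) ^ 2 * p ^ 3 := by positivity
        nlinarith [hnn]

end HetRG
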